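/- arXiv:1503.02870 — 2 statements merged into one kernel-verified Lean document; each statement's English description precedes it below -/
import Mathlib

section
/- Let a, b ∈ R^3 be unit vectors and α > 0. Define the 9×9 block matrix A = [[-αI, 0, [a]_×], [0, -αI, [b]_×], [[a]_×, [b]_×, 0]]. Then the operator norm of A is at most max(√(2+2α²), √(3+α²)). -/
noncomputable section

/-- The skew-symmetric cross-product matrix of `x ∈ ℝ³`. -/
def crossMat (x : EuclideanSpace ℝ (Fin 3)) : Matrix (Fin 3) (Fin 3) ℝ :=
  !![0, -x 2, x 1; x 2, 0, -x 0; -x 1, x 0, 0]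

/-- The cross product on `ℝ³` (Euclidean space). -/
def cross (x y : EuclideanSpace ℝ (Fin 3)) : EuclideanSpace ℝ (Fin 3) :=
  WithLp.toLp 2 ![x 1 * y 2 - x 2 * y 1, x 2 * y 0 - x 0 * y 2, x 0 * y 1 - x 1 * y 0]

/-- The 9×9 block matrix of the observer error LTV dynamics. -/
def AMat (α : ℝ) (a b : EuclideanSpace ℝ (Fin 3)) :
    Matrix (Fin 3 ⊕ (Fin 3 ⊕ Fin 3)) (Fin 3 ⊕ (Fin 3 ⊕ Fin 3)) ℝ :=
  Matrix.fromBlocks (-α • 1) (Matrix.fromCols 0 (crossMat a))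
    (Matrix.fromRows 0 (crossMat a))
    (Matrix.fromBlocks (-α • 1) (crossMat b) (crossMat b) 0)

/-! Writing `x = (u, v, w)`, the matrix acts as `(u, v, w) ↦ (-α u + a × w, -α v + b × w,
a × u + b × v)`. Since `‖c × y‖ ≤ ‖y‖` for a unit vector `c`, with `p, q, r` the norms of `u, v, w`
we get `‖A x‖² ≤ (|α| p + r)² + (|α| q + r)² + (p + q)²`, and AM-GM bounds this by
`max (2 + 2α²) (3 + α²) (p² + q² + r²)`. -/

open Matrix WithLp

theorem EuclideanSpace.norm_toLp_sumElim_sq {ι κ : Type*} [Fintype ι] [Fintype κ]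
    (f : ι → ℝ) (g : κ → ℝ) :
    ‖toLp 2 (Sum.elim f g)‖ ^ 2 = ‖toLp 2 f‖ ^ 2 + ‖toLp 2 g‖ ^ 2 := by
  simp [EuclideanSpace.norm_sq_eq, Fintype.sum_sum_type]

theorem ContinuousLinearMap.opNorm_le_sqrt_of_norm_sq_le {E F : Type*}
    [SeminormedAddCommGroup E] [SeminormedAddCommGroup F] [NormedSpace ℝ E] [NormedSpace ℝ F]
    (f : E →L[ℝ] F) {M : ℝ} (h : ∀ x, ‖f x‖ ^ 2 ≤ M * ‖x‖ ^ 2) : ‖f‖ ≤ √M := by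
  refine f.opNorm_le_bound (Real.sqrt_nonneg M) fun x => ?_
  rw [← Real.sqrt_sq (norm_nonneg x), ← Real.sqrt_mul' _ (sq_nonneg _)]
  exact Real.le_sqrt_of_sq_le (h x)

theorem norm_cross_sq_add_inner_sq (x y : EuclideanSpace ℝ (Fin 3)) :
    ‖cross x y‖ ^ 2 + inner ℝ x y ^ 2 = ‖x‖ ^ 2 * ‖y‖ ^ 2 := by
  simp [EuclideanSpace.norm_sq_eq, EuclideanSpace.inner_eq_star_dotProduct, dotProduct,
    Fin.sum_univ_three, cross]
  ring

theorem norm_cross_le (x y : EuclideanSpace ℝ (Fin 3)) : ‖cross x y‖ ≤ ‖x‖ * ‖y‖ := by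
  refine le_of_pow_le_pow_left₀ two_ne_zero (by positivity) ?_
  rw [mul_pow, ← norm_cross_sq_add_inner_sq]
  exact le_add_of_nonneg_right (sq_nonneg _)

theorem toLp_crossMat_mulVec (x y : EuclideanSpace ℝ (Fin 3)) :
    toLp 2 (crossMat x *ᵥ ofLp y) = cross x y := by
  ext i
  fin_cases i <;> simp [crossMat, cross, mulVec, dotProduct, Fin.sum_univ_three] <;> ring

theorem toLp_AMat_mulVec (α : ℝ) (a b u v w : EuclideanSpace ℝ (Fin 3)) :
    toLp 2 (AMat α a b *ᵥ Sum.elim (ofLp u) (Sum.elim (ofLp v) (ofLp w))) =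
      toLp 2 (Sum.elim (ofLp (-α • u + cross a w))
        (Sum.elim (ofLp (-α • v + cross b w)) (ofLp (cross a u + cross b v)))) := by
  simp only [← toLp_crossMat_mulVec]
  congr 1
  ext (i | i | i) <;> simp [AMat, fromBlocks_mulVec, neg_mulVec, smul_mulVec]

theorem sq_add_sq_add_sq_le_max_mul (t p q r : ℝ) :
    (t * p + r) ^ 2 + (t * q + r) ^ 2 + (p + q) ^ 2 ≤
      max (2 + 2 * t ^ 2) (3 + t ^ 2) * (p ^ 2 + q ^ 2 + r ^ 2) := by
  -- `2tpr` is split by AM-GM as `p² + t²r²` when `t² ≤ 1` and as `t²p² + r²` otherwise.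
  rcases le_total (t ^ 2) 1 with ht | ht
  · calc _ ≤ (3 + t ^ 2) * (p ^ 2 + q ^ 2 + r ^ 2) := by
          nlinarith [sq_nonneg (p - t * r), sq_nonneg (q - t * r), sq_nonneg (p - q),
            mul_nonneg (sub_nonneg.2 ht) (sq_nonneg r)]
      _ ≤ _ := by gcongr; exact le_max_right _ _
  · calc _ ≤ (2 + 2 * t ^ 2) * (p ^ 2 + q ^ 2 + r ^ 2) := by
          nlinarith [sq_nonneg (t * p - r), sq_nonneg (t * q - r), sq_nonneg (p - q),
            mul_nonneg (sub_nonneg.2 ht) (sq_nonneg r)]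
      _ ≤ _ := by gcongr; exact le_max_left _ _

theorem norm_smul_add_cross_le (c : ℝ) (u x w : EuclideanSpace ℝ (Fin 3)) :
    ‖c • u + cross x w‖ ≤ |c| * ‖u‖ + ‖x‖ * ‖w‖ := by
  grw [norm_add_le, norm_smul, Real.norm_eq_abs, norm_cross_le]

theorem stmt_3_general (α : ℝ) (a b : EuclideanSpace ℝ (Fin 3))
    (ha : ‖a‖ = 1) (hb : ‖b‖ = 1) :
    ‖Matrix.toEuclideanCLM (𝕜 := ℝ) (AMat α a b)‖ ≤
      max (Real.sqrt (2 + 2 * α ^ 2)) (Real.sqrt (3 + α ^ 2)) := by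
  rw [← Real.sqrt_monotone.map_max]
  refine ContinuousLinearMap.opNorm_le_sqrt_of_norm_sq_le _ fun x => ?_
  obtain ⟨u, v, w, rfl⟩ : ∃ u v w : EuclideanSpace ℝ (Fin 3),
      x = toLp 2 (Sum.elim (ofLp u) (Sum.elim (ofLp v) (ofLp w))) :=
    ⟨toLp 2 (ofLp x ∘ Sum.inl), toLp 2 (ofLp x ∘ Sum.inr ∘ Sum.inl),
      toLp 2 (ofLp x ∘ Sum.inr ∘ Sum.inr), by ext (i | i | i) <;> rfl⟩
  have h₁ : ‖-α • u + cross a w‖ ≤ |α| * ‖u‖ + ‖w‖ := by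
    simpa [ha] using norm_smul_add_cross_le (-α) u a w
  have h₂ : ‖-α • v + cross b w‖ ≤ |α| * ‖v‖ + ‖w‖ := by
    simpa [hb] using norm_smul_add_cross_le (-α) v b w
  have h₃ : ‖cross a u + cross b v‖ ≤ ‖u‖ + ‖v‖ := by
    grw [norm_add_le, norm_cross_le, norm_cross_le, ha, hb, one_mul, one_mul]
  simp only [Matrix.toEuclideanCLM_toLp, toLp_AMat_mulVec, EuclideanSpace.norm_toLp_sumElim_sq,
    toLp_ofLp, ← add_assoc]
  calc _ ≤ (|α| * ‖u‖ + ‖w‖) ^ 2 + (|α| * ‖v‖ + ‖w‖) ^ 2 + (‖u‖ + ‖v‖) ^ 2 := by gcongr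
    _ ≤ _ := by simpa [sq_abs] using sq_add_sq_add_sq_le_max_mul |α| ‖u‖ ‖v‖ ‖w‖

theorem stmt_3 (α : ℝ) (hα : 0 < α) (a b : EuclideanSpace ℝ (Fin 3))
    (ha : ‖a‖ = 1) (hb : ‖b‖ = 1) :
    ‖Matrix.toEuclideanCLM (𝕜 := ℝ) (AMat α a b)‖ ≤
      max (Real.sqrt (2 + 2 * α ^ 2)) (Real.sqrt (3 + α ^ 2)) :=
  stmt_3_general α a b ha hb
end
end

section
/- Let E(ω) = J^{-1}(Jω × ω) where J = diag(J1,J2,J3), J_i > 0, and J_i ≤ J_j + J_k for all permutations. Then for all ω, ω̂ ∈ R^3 with ω̃ = ω − ω̂ and |ω| ≤ ω_max: |E(ω) − E(ω̂)| ≤ √2 ω_max |ω̃| + |ω̃|². -/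
noncomputable section

/-- The Euler operator E(ω) = J⁻¹(Jω × ω) written in coordinates. -/
def eulerE (J1 J2 J3 : ℝ) (ω : EuclideanSpace ℝ (Fin 3)) : EuclideanSpace ℝ (Fin 3) :=
  WithLp.toLp 2 ![(J2 - J3) / J1 * (ω 1 * ω 2), (J3 - J1) / J2 * (ω 2 * ω 0),
    (J1 - J2) / J3 * (ω 0 * ω 1)]

/-! Writing `ω̂ = ω - t`, the difference `E(ω) - E(ω - t)` of the quadratic map `E` is its
polarisation `B(ω, t)` minus `E(t)`. The triangle inequalities between the moments of inertia make
every coefficient `(J_j - J_k) / J_i` of `E` at most one in absolute value, so it suffices to bound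
`B` and `E` with unit coefficients, where `(x₁y₂ + y₁x₂)² ≤ 2(x₁²y₂² + y₁²x₂²)` gives the `√2`. -/

theorem EuclideanSpace.norm_le_norm_of_abs_le {ι : Type*} [Fintype ι]
    {x y : EuclideanSpace ℝ ι} (h : ∀ i, |x i| ≤ |y i|) : ‖x‖ ≤ ‖y‖ := by
  simp only [EuclideanSpace.norm_eq, Real.norm_eq_abs]
  exact Real.sqrt_le_sqrt <| Finset.sum_le_sum fun i _ => pow_le_pow_left₀ (abs_nonneg _) (h i) 2

theorem EuclideanSpace.real_norm_sq_eq_fin_three (x : EuclideanSpace ℝ (Fin 3)) :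
    ‖x‖ ^ 2 = x 0 ^ 2 + x 1 ^ 2 + x 2 ^ 2 := by
  rw [real_norm_sq_eq, Fin.sum_univ_three]

namespace EulerOperator

open EuclideanSpace

variable (a b c : ℝ)

def quadMap (x : EuclideanSpace ℝ (Fin 3)) : EuclideanSpace ℝ (Fin 3) :=
  WithLp.toLp 2 ![a * (x 1 * x 2), b * (x 2 * x 0), c * (x 0 * x 1)]

def polarMap (x y : EuclideanSpace ℝ (Fin 3)) : EuclideanSpace ℝ (Fin 3) :=
  WithLp.toLp 2 ![a * (x 1 * y 2 + y 1 * x 2), b * (x 2 * y 0 + y 2 * x 0),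
    c * (x 0 * y 1 + y 0 * x 1)]

theorem eulerE_eq_quadMap (J1 J2 J3 : ℝ) :
    eulerE J1 J2 J3 = quadMap ((J2 - J3) / J1) ((J3 - J1) / J2) ((J1 - J2) / J3) :=
  rfl

theorem quadMap_sub_quadMap_sub (x t : EuclideanSpace ℝ (Fin 3)) :
    quadMap a b c x - quadMap a b c (x - t) = polarMap a b c x t - quadMap a b c t := by
  ext i
  fin_cases i <;>
    simp only [quadMap, polarMap, PiLp.sub_apply, Fin.zero_eta, Fin.mk_one, Fin.reduceFinMk,
      Matrix.cons_val] <;> ring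

variable {a b c}

theorem norm_toLp_mul_le_of_abs_le_one (ha : |a| ≤ 1) (hb : |b| ≤ 1) (hc : |c| ≤ 1)
    (u v w : ℝ) :
    ‖(WithLp.toLp 2 ![a * u, b * v, c * w] : EuclideanSpace ℝ (Fin 3))‖ ≤
      ‖(WithLp.toLp 2 ![u, v, w] : EuclideanSpace ℝ (Fin 3))‖ := by
  refine norm_le_norm_of_abs_le fun i => ?_
  fin_cases i
  · simpa [abs_mul] using mul_le_of_le_one_left (abs_nonneg u) ha
  · simpa [abs_mul] using mul_le_of_le_one_left (abs_nonneg v) hb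
  · simpa [abs_mul] using mul_le_of_le_one_left (abs_nonneg w) hc

theorem norm_polarMap_le (ha : |a| ≤ 1) (hb : |b| ≤ 1) (hc : |c| ≤ 1)
    (x y : EuclideanSpace ℝ (Fin 3)) : ‖polarMap a b c x y‖ ≤ √2 * ‖x‖ * ‖y‖ := by
  refine (norm_toLp_mul_le_of_abs_le_one ha hb hc _ _ _).trans
    (le_of_pow_le_pow_left₀ two_ne_zero (by positivity) ?_)
  rw [real_norm_sq_eq_fin_three, mul_pow, mul_pow, Real.sq_sqrt zero_le_two,
    real_norm_sq_eq_fin_three, real_norm_sq_eq_fin_three]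
  simp only [Matrix.cons_val]
  nlinarith [add_sq_le (a := x 1 * y 2) (b := y 1 * x 2),
    add_sq_le (a := x 2 * y 0) (b := y 2 * x 0), add_sq_le (a := x 0 * y 1) (b := y 0 * x 1),
    mul_nonneg (sq_nonneg (x 0)) (sq_nonneg (y 0)),
    mul_nonneg (sq_nonneg (x 1)) (sq_nonneg (y 1)), mul_nonneg (sq_nonneg (x 2)) (sq_nonneg (y 2))]

theorem norm_quadMap_le (ha : |a| ≤ 1) (hb : |b| ≤ 1) (hc : |c| ≤ 1)
    (x : EuclideanSpace ℝ (Fin 3)) : ‖quadMap a b c x‖ ≤ ‖x‖ ^ 2 := by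
  refine (norm_toLp_mul_le_of_abs_le_one ha hb hc _ _ _).trans
    (le_of_pow_le_pow_left₀ two_ne_zero (by positivity) ?_)
  rw [real_norm_sq_eq_fin_three, real_norm_sq_eq_fin_three x]
  simp only [Matrix.cons_val]
  nlinarith [sq_nonneg (x 0 ^ 2), sq_nonneg (x 1 ^ 2), sq_nonneg (x 2 ^ 2)]

theorem abs_sub_div_le_one {Ji Jj Jk : ℝ} (hi : 0 < Ji) (hj : Jj ≤ Jk + Ji) (hk : Jk ≤ Ji + Jj) :
    |(Jj - Jk) / Ji| ≤ 1 := by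
  rw [abs_div, abs_of_pos hi, div_le_one hi, abs_le]
  constructor <;> linarith

end EulerOperator

open EulerOperator

theorem stmt_6 (J1 J2 J3 : ℝ) (h1 : 0 < J1) (h2 : 0 < J2) (h3 : 0 < J3)
    (t1 : J1 ≤ J2 + J3) (t2 : J2 ≤ J3 + J1) (t3 : J3 ≤ J1 + J2)
    (ωmax : ℝ) (ω ωh : EuclideanSpace ℝ (Fin 3)) (hω : ‖ω‖ ≤ ωmax) :
    ‖eulerE J1 J2 J3 ω - eulerE J1 J2 J3 ωh‖ ≤
      Real.sqrt 2 * ωmax * ‖ω - ωh‖ + ‖ω - ωh‖ ^ 2 := by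
  have ha := abs_sub_div_le_one h1 t2 t3
  have hb := abs_sub_div_le_one h2 t3 t1
  have hc := abs_sub_div_le_one h3 t1 t2
  obtain ⟨t, rfl⟩ : ∃ t, ωh = ω - t := ⟨ω - ωh, (sub_sub_cancel ω ωh).symm⟩
  rw [sub_sub_cancel, eulerE_eq_quadMap, quadMap_sub_quadMap_sub]
  calc _ ≤ ‖polarMap _ _ _ ω t‖ + ‖quadMap _ _ _ t‖ := norm_sub_le _ _
    _ ≤ √2 * ‖ω‖ * ‖t‖ + ‖t‖ ^ 2 :=
      add_le_add (norm_polarMap_le ha hb hc ω t) (norm_quadMap_le ha hb hc t)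
    _ ≤ √2 * ωmax * ‖t‖ + ‖t‖ ^ 2 := by gcongr
end
end
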